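/- arXiv:1409.4282 — 5 statements merged into one kernel-verified Lean document; each statement's English description precedes it below -/
import Mathlib

section
/- Let q = 2k-1 be an odd prime power with q ≡ 1 (mod 4), χ the quadratic character on GF(q), and ω a complex number of modulus 1. For any nonzero b in GF(q), the sum over all a in GF(q) with a ≠ 0 and a ≠ -b of ω^(χ(a) - χ(a+b)) equals (k-2) + (k-1)·Re(ω²). -/
/-!
For `u, v ∈ {±1}` and `|ω| = 1`, `ω ^ (u - v)` is `1`, `ω²` or `ω̄²`, hence an affine function
of `uv` and `u - v`. Summing over `a` with `u = χ(a)`, `v = χ(a + b)`, only three sums remain: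
the number `q - 2` of terms, the Jacobsthal-type sum `∑ χ(a) χ(a + b) = -1` (a Jacobi sum
`J(χ, χ) = -χ(-1)` after the substitution `a = -b x`), and `∑ (χ(a) - χ(a + b)) = χ(b) - χ(-b)`,
which vanishes because `χ(-1) = 1` when `q ≡ 1 (mod 4)`.
-/

open Finset

theorem quadraticChar_sum_mul_add {F : Type*} [Field F] [Fintype F] [DecidableEq F]
    (hF : ringChar F ≠ 2) {b : F} (hb : b ≠ 0) :
    ∑ a : F, quadraticChar F a * quadraticChar F (a + b) = -1 := by
  set χ := quadraticChar F
  have hJ : jacobiSum χ χ = -χ (-1) := by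
    simpa only [(quadraticChar_isQuadratic F).inv] using
      jacobiSum_nontrivial_inv (quadraticChar_ne_one hF)
  calc ∑ a : F, χ a * χ (a + b)
      = ∑ x : F, χ (-b * x) * χ (-b * x + b) :=
        (Fintype.sum_equiv (Equiv.mulLeft₀ (-b) (neg_ne_zero.mpr hb)) _ _ fun _ ↦ rfl).symm
    _ = ∑ x : F, χ (-1) * (χ x * χ (1 - x)) := by
        refine sum_congr rfl fun x _ ↦ ?_
        calc χ (-b * x) * χ (-b * x + b) = χ (b ^ 2 * (-1 * (x * (1 - x)))) := by
              rw [← map_mul]; congr 1; ring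
          _ = χ (-1) * (χ x * χ (1 - x)) := by
              rw [map_mul, quadraticChar_sq_one' hb, one_mul, map_mul, map_mul]
    _ = -1 := by
        rw [← mul_sum, ← jacobiSum, hJ, mul_neg, ← map_mul]
        simp

theorem sum_filter_ne_zero_ne_neg {G M : Type*} [AddGroup G] [Fintype G] [DecidableEq G]
    [AddCommGroup M] {b : G} (hb : b ≠ 0) (f : G → M) :
    ∑ a ∈ univ.filter (fun a : G => a ≠ 0 ∧ a ≠ -b), f a = ∑ a, f a - f 0 - f (-b) := by
  have hcompl : univ.filter (fun a : G => ¬(a ≠ 0 ∧ a ≠ -b)) = {0, -b} := by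
    ext a; simp [or_iff_not_imp_left]
  rw [← sum_filter_add_sum_filter_not univ (fun a : G => a ≠ 0 ∧ a ≠ -b), hcompl,
    sum_pair (by simpa [eq_comm] using hb)]
  abel

theorem Complex.zpow_sub_eq_of_norm_eq_one {ω : ℂ} (hω : ‖ω‖ = 1) {u v : ℤ}
    (hu : u = 1 ∨ u = -1) (hv : v = 1 ∨ v = -1) :
    ω ^ (u - v) = (1 + (ω ^ 2).re) / 2 + (1 - (ω ^ 2).re) / 2 * (u * v : ℤ)
      + I * (ω ^ 2).im / 2 * (u - v : ℤ) := by
  have hsq : ω ^ 2 = (ω ^ 2).re + (ω ^ 2).im * I := (re_add_im _).symm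
  have hinv : (ω ^ 2)⁻¹ = (ω ^ 2).re - (ω ^ 2).im * I := by
    rw [inv_eq_conj (by simp [hω])]
    conv_lhs => rw [← re_add_im (ω ^ 2)]
    simp only [map_add, map_mul, conj_ofReal, conj_I, mul_neg, sub_eq_add_neg]
  rcases hu with rfl | rfl <;> rcases hv with rfl | rfl <;> push_cast <;>
    simp only [zpow_ofNat, zpow_neg]
  · ring
  · linear_combination hsq
  · linear_combination hinv
  · ring

theorem Complex.sum_zpow_sub_eq_of_norm_eq_one {ι : Type*} {ω : ℂ} (hω : ‖ω‖ = 1) (s : Finset ι)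
    {u v : ι → ℤ} (hu : ∀ i ∈ s, u i = 1 ∨ u i = -1) (hv : ∀ i ∈ s, v i = 1 ∨ v i = -1) :
    ∑ i ∈ s, ω ^ (u i - v i) = #s * ((1 + (ω ^ 2).re) / 2)
      + (1 - (ω ^ 2).re) / 2 * (∑ i ∈ s, u i * v i : ℤ)
      + I * (ω ^ 2).im / 2 * (∑ i ∈ s, (u i - v i) : ℤ) := by
  rw [sum_congr rfl fun i hi ↦ zpow_sub_eq_of_norm_eq_one hω (hu i hi) (hv i hi),
    sum_add_distrib, sum_add_distrib, sum_const, nsmul_eq_mul, ← mul_sum, ← mul_sum]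
  push_cast
  rfl

theorem amazing_formula_general (F : Type*) [Field F] [Fintype F] [DecidableEq F]
    (hmod : Fintype.card F % 4 = 1)
    (k : ℕ) (hk : Fintype.card F = 2 * k - 1)
    (ω : ℂ) (hω : ‖ω‖ = 1) (b : F) (hb : b ≠ 0) :
    ∑ a ∈ univ.filter (fun a : F => a ≠ 0 ∧ a ≠ -b),
        ω ^ ((quadraticChar F a - quadraticChar F (a + b) : ℤ)) =
      ((k : ℂ) - 2) + ((k : ℂ) - 1) * ((ω ^ 2).re : ℂ) := by
  set S := univ.filter (fun a : F => a ≠ 0 ∧ a ≠ -b)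
  have hF : ringChar F ≠ 2 := by rw [Ne, FiniteField.even_card_iff_char_two]; omega
  have hneg : quadraticChar F (-b) = quadraticChar F b := by
    rw [neg_eq_neg_one_mul, map_mul, quadraticChar_neg_one hF, ZMod.χ₄_nat_one_mod_four hmod,
      one_mul]
  have hprod : ∑ a ∈ S, quadraticChar F a * quadraticChar F (a + b) = -1 := by
    rw [sum_filter_ne_zero_ne_neg hb, quadraticChar_sum_mul_add hF hb]
    simp
  have hdiff : ∑ a ∈ S, (quadraticChar F a - quadraticChar F (a + b)) = 0 := by
    rw [sum_filter_ne_zero_ne_neg hb, sum_sub_distrib,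
      Fintype.sum_equiv (Equiv.addRight b) (fun a ↦ quadraticChar F (a + b)) _ fun _ ↦ rfl]
    simp [hneg]
  have hcard : (#S : ℂ) = 2 * k - 3 := by
    have hpos : 1 ≤ 2 * k := by have := Fintype.card_pos (α := F); omega
    rw [← nsmul_one, ← sum_const, sum_filter_ne_zero_ne_neg hb, sum_const, card_univ, nsmul_one,
      hk, Nat.cast_sub hpos]
    push_cast
    ring
  rw [Complex.sum_zpow_sub_eq_of_norm_eq_one hω S
    (fun a ha ↦ quadraticChar_dichotomy (mem_filter.mp ha).2.1)
    (fun a ha ↦ quadraticChar_dichotomy fun h ↦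
      (mem_filter.mp ha).2.2 (eq_neg_of_add_eq_zero_left h)),
    hprod, hdiff, hcard]
  push_cast
  ring

/-- For `q = 2k-1` an odd prime power, `q ≡ 1 (mod 4)`, `ω` a unit
complex number and `b ≠ 0` in `GF(q)`,
`∑_{a ≠ 0, a ≠ -b} ω^(χ(a) - χ(a+b)) = (k-2) + (k-1)·Re(ω²)`. -/
theorem amazing_formula (F : Type*) [Field F] [Fintype F] [DecidableEq F]
    (p : ℕ) (α : ℕ) (hp : p.Prime) (hodd : p ≠ 2)
    (hcard : Fintype.card F = p ^ α) (hmod : Fintype.card F % 4 = 1)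
    (k : ℕ) (hk : Fintype.card F = 2 * k - 1) (hk2 : 2 ≤ k)
    (ω : ℂ) (hω : ‖ω‖ = 1) (b : F) (hb : b ≠ 0) :
    ∑ a ∈ univ.filter (fun a : F => a ≠ 0 ∧ a ≠ -b),
        ω ^ ((quadraticChar F a - quadraticChar F (a + b) : ℤ)) =
      ((k : ℂ) - 2) + ((k : ℂ) - 1) * ((ω ^ 2).re : ℂ) :=
  amazing_formula_general F hmod k hk ω hω b hb
end

section
/- Let q = 2k-1 = p^α with p odd prime and q ≡ 1 (mod 4), k ≥ 3. Let ω₀ be a unit complex number with Re(ω₀²) = (2-k)/(k-1). Then the matrix C(ω₀) with zero diagonal and off-diagonal entries ω₀^(χ(a-b)) satisfies C·C* = (2k-2)·I; that is, C(ω₀) is a complex symmetric conference matrix of odd order 2k-1. -/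
/-!
With `A = (ω + ω⁻¹) / 2` and `B = (ω - ω⁻¹) / 2` we have `ω ^ (±1) = A ± B`, so
`C(ω) = A (J - 1) + B Q`, where `J` is the all-ones matrix and `Q a b = χ (a - b)` is the
Jacobsthal matrix. For `q ≡ 1 [MOD 4]` the matrix `Q` is symmetric, `Q J = J Q = 0`, and
`Q Qᵀ = q • 1 - J` because `∑ c, χ (a - c) χ (b - c)` is a Jacobi sum equal to `-1` for `a ≠ b`.
For `|ω| = 1` the adjoint `C(ω)ᴴ = C(ω⁻¹)` has the same shape, so `C Cᴴ` is a combination of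
`1` and `J`; the condition on `Re (ω²)` is exactly the one that kills the coefficient of `J`.
-/

open Matrix

section CharacterSums

variable {F : Type*} [Field F] [Fintype F] [DecidableEq F]

lemma quadraticChar_sub_comm (hF : Fintype.card F % 4 = 1) (a b : F) :
    quadraticChar F (b - a) = quadraticChar F (a - b) := by
  have hneg : quadraticChar F (-1) = 1 := by
    rw [quadraticChar_one_iff_isSquare (neg_ne_zero.mpr one_ne_zero),
      FiniteField.isSquare_neg_one_iff]
    omega
  rw [← neg_sub, neg_eq_neg_one_mul, map_mul, hneg, one_mul]

lemma quadraticChar_sum_sub_mul_self (a : F) :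
    ∑ c, quadraticChar F (a - c) * quadraticChar F (a - c) = Fintype.card F - 1 := by
  refine ((Equiv.subLeft a).sum_comp fun c => quadraticChar F c * quadraticChar F c).trans ?_
  simp only [← sq, ← (quadraticChar F).pow_apply' two_ne_zero,
    (quadraticChar_isQuadratic F).sq_eq_one]
  rw [MulChar.sum_one_eq_card_units, Fintype.card_units, Nat.cast_sub Fintype.card_pos,
    Nat.cast_one]

variable (hF : ringChar F ≠ 2)
include hF

lemma quadraticChar_sum_sub_left (a : F) : ∑ c, quadraticChar F (a - c) = 0 :=
  ((Equiv.subLeft a).sum_comp _).trans (quadraticChar_sum_zero hF)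

lemma quadraticChar_sum_sub_right (b : F) : ∑ c, quadraticChar F (c - b) = 0 :=
  ((Equiv.subRight b).sum_comp _).trans (quadraticChar_sum_zero hF)

lemma quadraticChar_sum_mul_sub_sub {a b : F} (hab : a ≠ b) :
    ∑ c, quadraticChar F (a - c) * quadraticChar F (b - c) = -1 := by
  have hd : a - b ≠ 0 := sub_ne_zero.mpr hab
  -- substituting `c = a - (a - b) x` turns the sum into `χ(-1)` times the Jacobi sum `J(χ, χ)`
  have hsub (x : F) : quadraticChar F (a - (a - (a - b) * x)) *
      quadraticChar F (b - (a - (a - b) * x)) =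
      quadraticChar F (-1) * (quadraticChar F x * quadraticChar F (1 - x)) := by
    rw [show b - (a - (a - b) * x) = -1 * (a - b) * (1 - x) by ring, sub_sub_cancel]
    simp only [map_mul]
    have hsq := quadraticChar_sq_one hd
    linear_combination (quadraticChar F (-1) * quadraticChar F x * quadraticChar F (1 - x)) * hsq
  have hJ : jacobiSum (quadraticChar F) (quadraticChar F) = -quadraticChar F (-1) := by
    simpa only [(quadraticChar_isQuadratic F).inv] using
      jacobiSum_nontrivial_inv (quadraticChar_ne_one hF)
  rw [← ((Equiv.mulLeft₀ _ hd).trans (Equiv.subLeft a)).sum_comp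
    (fun c => quadraticChar F (a - c) * quadraticChar F (b - c))]
  simp only [Equiv.trans_apply, Equiv.mulLeft₀_apply, Equiv.subLeft_apply, hsub,
    ← Finset.mul_sum]
  rw [← jacobiSum, hJ, mul_neg, ← sq, quadraticChar_sq_one (neg_ne_zero.mpr one_ne_zero)]

end CharacterSums

lemma of_one_mul_of_one {n R : Type*} [Fintype n] [Semiring R] :
    (of 1 : Matrix n n R) * of 1 = (Fintype.card n : R) • of 1 := by
  ext a b
  simp [mul_apply]

section Jacobsthal

variable (F : Type*) [Field F] [Fintype F] [DecidableEq F] (R : Type*) [CommRing R]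

def jacobsthalMatrix : Matrix F F R := of fun a b => (quadraticChar F (a - b) : R)

variable {F R}

lemma jacobsthalMatrix_transpose (hF : Fintype.card F % 4 = 1) :
    (jacobsthalMatrix F R)ᵀ = jacobsthalMatrix F R := by
  ext a b
  simp only [jacobsthalMatrix, transpose_apply, of_apply, quadraticChar_sub_comm hF]

section OddCharacteristic

variable (hF : ringChar F ≠ 2)
include hF

lemma jacobsthalMatrix_mul_of_one : jacobsthalMatrix F R * of 1 = 0 := by
  ext a b
  simp only [jacobsthalMatrix, mul_apply, of_apply, Pi.one_apply, mul_one, Matrix.zero_apply]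
  rw [← Int.cast_sum, quadraticChar_sum_sub_left hF a, Int.cast_zero]

lemma of_one_mul_jacobsthalMatrix : of 1 * jacobsthalMatrix F R = 0 := by
  ext a b
  simp only [jacobsthalMatrix, mul_apply, of_apply, Pi.one_apply, one_mul, Matrix.zero_apply]
  rw [← Int.cast_sum, quadraticChar_sum_sub_right hF b, Int.cast_zero]

lemma jacobsthalMatrix_mul_transpose :
    jacobsthalMatrix F R * (jacobsthalMatrix F R)ᵀ = (Fintype.card F : R) • 1 - of 1 := by
  ext a b
  simp only [jacobsthalMatrix, mul_apply, transpose_apply, of_apply, Matrix.sub_apply,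
    Matrix.smul_apply, one_apply, Pi.one_apply, smul_eq_mul]
  push_cast [← Int.cast_mul, ← Int.cast_sum]
  rcases eq_or_ne a b with rfl | hab
  · rw [quadraticChar_sum_sub_mul_self]
    simp
  · rw [quadraticChar_sum_mul_sub_sub hF hab]
    simp [hab]

end OddCharacteristic

lemma smul_add_smul_jacobsthalMatrix_mul (hF : Fintype.card F % 4 = 1) (A B A' B' : R) :
    (A • (of 1 - 1) + B • jacobsthalMatrix F R) * (A' • (of 1 - 1) + B' • jacobsthalMatrix F R) =
      (A * A' + Fintype.card F * B * B') • 1 + ((Fintype.card F - 2) * A * A' - B * B') • of 1 -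
        (A * B' + A' * B) • jacobsthalMatrix F R := by
  have hF2 : ringChar F ≠ 2 := fun h => by
    have := FiniteField.even_card_iff_char_two.mp h
    omega
  have hQQ := jacobsthalMatrix_mul_transpose (R := R) hF2
  rw [jacobsthalMatrix_transpose hF] at hQQ
  simp only [add_mul, mul_add, sub_mul, mul_sub, Matrix.smul_mul, Matrix.mul_smul, one_mul,
    mul_one, of_one_mul_of_one, jacobsthalMatrix_mul_of_one hF2,
    of_one_mul_jacobsthalMatrix hF2, hQQ]
  module

end Jacobsthal

lemma zpow_eq_of_eq_one_or_eq_neg_one {K : Type*} [Field K] (hK : (2 : K) ≠ 0) (ω : K) {n : ℤ}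
    (hn : n = 1 ∨ n = -1) : ω ^ n = (ω + ω⁻¹) / 2 + n * ((ω - ω⁻¹) / 2) := by
  rcases hn with rfl | rfl
  · rw [Int.cast_one, one_mul, zpow_one, ← add_div, add_add_sub_cancel, ← two_mul,
      mul_div_cancel_left₀ _ hK]
  · rw [Int.cast_neg, Int.cast_one, neg_one_mul, _root_.zpow_neg_one, ← sub_eq_add_neg, ← sub_div,
      add_sub_sub_cancel, ← two_mul, mul_div_cancel_left₀ _ hK]

section ZPowMatrix

variable (F : Type*) [Field F] [Fintype F] [DecidableEq F] {K : Type*} [Field K]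

def quadraticCharZPowMatrix (ω : K) : Matrix F F K :=
  of fun a b => if a = b then 0 else ω ^ quadraticChar F (a - b)

variable {F}

lemma quadraticCharZPowMatrix_eq (hK : (2 : K) ≠ 0) (ω : K) :
    quadraticCharZPowMatrix F ω =
      ((ω + ω⁻¹) / 2) • (of 1 - 1) + ((ω - ω⁻¹) / 2) • jacobsthalMatrix F K := by
  ext a b
  simp only [quadraticCharZPowMatrix, jacobsthalMatrix, of_apply, Matrix.add_apply,
    Matrix.smul_apply, Matrix.sub_apply, one_apply, Pi.one_apply, smul_eq_mul]
  rcases eq_or_ne a b with rfl | hab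
  · simp
  · rw [if_neg hab, if_neg hab, sub_zero, mul_one, mul_comm _ (_ : ℤ).cast,
      zpow_eq_of_eq_one_or_eq_neg_one hK ω (quadraticChar_dichotomy (sub_ne_zero.mpr hab))]

lemma conjTranspose_quadraticCharZPowMatrix (hF : Fintype.card F % 4 = 1) {ω : ℂ}
    (hω : ‖ω‖ = 1) : (quadraticCharZPowMatrix F ω)ᴴ = quadraticCharZPowMatrix F ω⁻¹ := by
  ext a b
  simp only [quadraticCharZPowMatrix, conjTranspose_apply, of_apply, quadraticChar_sub_comm hF,
    eq_comm (a := b)]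
  split_ifs
  · simp
  · rw [star_zpow₀, Complex.star_def, ← Complex.inv_eq_conj hω]

lemma quadraticCharZPowMatrix_mul_conjTranspose (hF : Fintype.card F % 4 = 1) {ω : ℂ}
    (hω : ‖ω‖ = 1) :
    quadraticCharZPowMatrix F ω * (quadraticCharZPowMatrix F ω)ᴴ =
      (((1 - Fintype.card F) * (ω ^ 2).re + Fintype.card F + 1) / 2 : ℂ) • 1 +
        (((Fintype.card F - 1) * (ω ^ 2).re + Fintype.card F - 3) / 2 : ℂ) • of 1 := by
  have huv : ω * ω⁻¹ = 1 := mul_inv_cancel₀ (norm_ne_zero_iff.mp (hω ▸ one_ne_zero))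
  have hre : ω ^ 2 + ω⁻¹ ^ 2 = 2 * (ω ^ 2).re := by
    rw [Complex.inv_eq_conj hω, ← map_pow, Complex.add_conj]
    push_cast
    ring
  have hjac : (ω + ω⁻¹) / 2 * ((ω⁻¹ - ω) / 2) + (ω⁻¹ + ω) / 2 * ((ω - ω⁻¹) / 2) = 0 := by ring
  rw [conjTranspose_quadraticCharZPowMatrix hF hω, quadraticCharZPowMatrix_eq two_ne_zero,
    quadraticCharZPowMatrix_eq two_ne_zero, smul_add_smul_jacobsthalMatrix_mul hF, inv_inv, hjac,
    zero_smul, sub_zero]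
  congr 2
  · linear_combination ((1 - Fintype.card F) / 4 : ℂ) * hre + ((1 + Fintype.card F) / 2 : ℂ) * huv
  · linear_combination ((Fintype.card F - 1) / 4 : ℂ) * hre + ((Fintype.card F - 3) / 2 : ℂ) * huv

end ZPowMatrix

theorem conference_matrix_general (F : Type*) [Field F] [Fintype F] [DecidableEq F]
    (hmod : Fintype.card F % 4 = 1)
    (k : ℕ) (hk : Fintype.card F = 2 * k - 1)
    (ω₀ : ℂ) (hω : ‖ω₀‖ = 1)
    (hre : (ω₀ ^ 2).re = (2 - (k : ℝ)) / ((k : ℝ) - 1))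
    (C : Matrix F F ℂ)
    (hC : C = Matrix.of fun a b : F =>
      if a = b then 0 else ω₀ ^ ((quadraticChar F (a - b) : ℤ))) :
    C * Cᴴ = (2 * (k : ℂ) - 2) • 1 := by
  have hk2 : 2 ≤ k := by have := Fintype.one_lt_card (α := F); omega
  have hk1 : (k : ℂ) - 1 ≠ 0 := sub_ne_zero.mpr (by exact_mod_cast (by omega : k ≠ 1))
  have hq : (Fintype.card F : ℂ) = 2 * k - 1 := by
    rw [hk, Nat.cast_sub (by omega)]
    push_cast
    ring
  have hC' : C = quadraticCharZPowMatrix F ω₀ := hC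
  rw [hC', quadraticCharZPowMatrix_mul_conjTranspose hmod hω, hre, hq]
  push_cast
  have hdiag :
      ((1 - (2 * k - 1)) * ((2 - k) / (k - 1)) + (2 * k - 1) + 1) / 2 = (2 * k - 2 : ℂ) := by
    field_simp
    ring
  have hoff : ((2 * k - 1 - 1) * ((2 - k) / (k - 1)) + (2 * k - 1) - 3) / 2 = (0 : ℂ) := by
    field_simp
    ring
  rw [hdiag, hoff, zero_smul, add_zero]

/-- For `q = 2k-1 ≡ 1 (mod 4)` an odd prime power, `k ≥ 3`, and `ω₀` a unit
complex number with `Re(ω₀²) = (2-k)/(k-1)`, the matrix `C(ω₀)` with zero diagonal and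
entries `ω₀^(χ(a-b))` satisfies `C·C* = (2k-2)·I`: it is a complex symmetric conference
matrix of odd order `2k-1`. -/
theorem conference_matrix (F : Type*) [Field F] [Fintype F] [DecidableEq F]
    (p : ℕ) (α : ℕ) (hp : p.Prime) (hodd : p ≠ 2)
    (hcard : Fintype.card F = p ^ α) (hmod : Fintype.card F % 4 = 1)
    (k : ℕ) (hk : Fintype.card F = 2 * k - 1) (hk3 : 3 ≤ k)
    (ω₀ : ℂ) (hω : ‖ω₀‖ = 1)
    (hre : (ω₀ ^ 2).re = (2 - (k : ℝ)) / ((k : ℝ) - 1))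
    (C : Matrix F F ℂ)
    (hC : C = Matrix.of fun a b : F =>
      if a = b then 0 else ω₀ ^ ((quadraticChar F (a - b) : ℤ))) :
    C * Cᴴ = (2 * (k : ℂ) - 2) • 1 :=
  conference_matrix_general F hmod k hk ω₀ hω hre C hC
end

section
/- The 5×5 circulant matrix C with zero diagonal and entries C_{ab} = j^(χ(a-b)) for a ≠ b over GF(5), where j = e^(2πi/3) and χ is the Legendre symbol mod 5, is a complex symmetric conference matrix: C = Cᵀ and C·C* = 4·I₅. -/
open Matrix

instance : Fact (Nat.Prime 5) := ⟨by norm_num⟩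

set_option maxHeartbeats 2000000 in
/-- The 5×5 matrix over `GF(5)` with zero diagonal and entries
`j^(χ(a-b))` for `a ≠ b`, where `j = e^(2πi/3)` and `χ` is the Legendre symbol mod 5,
is a complex symmetric conference matrix: `C = Cᵀ` and `C·C* = 4·I₅`. -/
theorem conference_order_five
    (j : ℂ) (hj : j = Complex.exp (2 * Real.pi * Complex.I / 3))
    (C : Matrix (ZMod 5) (ZMod 5) ℂ)
    (hC : C = Matrix.of fun a b : ZMod 5 =>
      if a = b then 0 else j ^ ((quadraticChar (ZMod 5) (a - b) : ℤ))) :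
    C.IsSymm ∧ C * Cᴴ = (4 : ℂ) • 1 := by
  have hp : IsPrimitiveRoot j 3 := hj ▸ Complex.isPrimitiveRoot_exp 3 (by norm_num)
  have hj3 : j ^ 3 = 1 := hp.pow_eq_one
  have hne : j ≠ 1 := hp.ne_one (by norm_num)
  have hsum : j ^ 2 + j + 1 = 0 := by
    have h : (j - 1) * (j ^ 2 + j + 1) = 0 := by linear_combination hj3
    rcases mul_eq_zero.mp h with h | h
    · exact absurd (by linear_combination h) hne
    · exact h
  have hj0 : j ≠ 0 := fun h => by simp [h] at hj3
  have hinv : j⁻¹ = j ^ 2 :=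
    inv_eq_of_mul_eq_one_right (by linear_combination hj3)
  have h1 : (starRingEnd ℂ) j = j⁻¹ := by
    rw [hj, ← Complex.exp_conj, ← Complex.exp_neg]
    congr 1
    simp [Complex.conj_I, map_ofNat]
    ring
  have hstar : star j = j ^ 2 := by
    rw [show (star j : ℂ) = (starRingEnd ℂ) j from rfl, h1, hinv]
  have hz1 : j ^ ((1:ℤ)) = j := zpow_one j
  have hzm : j ^ ((-1:ℤ)) = j ^ 2 := by
    rw [show ((-1 : ℤ)) = -(1 : ℤ) from rfl, _root_.zpow_neg, zpow_one, hinv]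
  have hqv : ∀ x : ZMod 5, (quadraticChar (ZMod 5) x : ℤ) =
      if x = 0 then 0 else if x = 1 ∨ x = 4 then 1 else -1 := by decide
  have hsum5 : ∀ f : ZMod 5 → ℂ, ∑ x : ZMod 5, f x = f 0 + f 1 + f 2 + f 3 + f 4 := by
    intro f
    rw [show (Finset.univ : Finset (ZMod 5)) = {0, 1, 2, 3, 4} from by decide]
    simp (config := { decide := true }) [Finset.sum_insert]
    ring
  have h2 : j ^ 2 = -1 - j := by linear_combination hsum
  have h4 : j ^ 4 = j := by linear_combination j * hj3
  have h5 : j ^ 5 = -1 - j := by linear_combination j ^ 2 * hj3 + hsum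
  have h6 : j ^ 6 = 1 := by linear_combination (j ^ 3 + 1) * hj3
  have hcase : ∀ x : ZMod 5, x = 0 ∨ x = 1 ∨ x = 2 ∨ x = 3 ∨ x = 4 := by decide
  constructor
  · subst hC
    ext a b
    have hq : ∀ x y : ZMod 5,
        quadraticChar (ZMod 5) (x - y) = quadraticChar (ZMod 5) (y - x) := by decide
    simp only [Matrix.transpose_apply, Matrix.of_apply]
    rw [hq b a]
    by_cases h : a = b
    · simp [h]
    · rw [if_neg (Ne.symm h), if_neg h]
  · subst hC
    ext a b
    rw [Matrix.mul_apply, hsum5]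
    simp only [Matrix.conjTranspose_apply, Matrix.of_apply]
    rcases hcase a with rfl|rfl|rfl|rfl|rfl <;> rcases hcase b with rfl|rfl|rfl|rfl|rfl <;>
      simp (config := { decide := true }) [hqv, hz1, hzm, hstar, Matrix.one_apply, star_pow] <;>
      (ring_nf; simp only [h6, h5, h4, hj3, h2]; ring)
end

section
/- If C is a complex conference matrix of order n (zero diagonal, unimodular off-diagonal entries, C·C* = (n-1)·I), then the 2n×2n block matrix H = [[C+I, C*-I],[C-I, -C*-I]] is a complex Hadamard matrix: all entries of H have modulus 1 and H·H* = 2n·I. -/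
open Matrix

/-!
Both claims are block computations. Each entry of `H` is an entry of `C` or of `Cᴴ` shifted by
`±1` on the diagonal; since the diagonal of `C` vanishes, every entry is `±1` or an off-diagonal
entry of `C` up to conjugation and sign, hence unimodular. For the rows, writing
`H = [[C + 1, Cᴴ - 1], [C - 1, -Cᴴ - 1]]`, the linear terms cancel in every block of `H * Hᴴ`,
leaving `C Cᴴ + Cᴴ C + 2` on the diagonal and the commutator `C Cᴴ - Cᴴ C` off it. Symmetry of `C`
gives `Cᴴ C = (C Cᴴ)ᵀ = (n - 1) • 1`, so the commutator vanishes and the diagonal blocks are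
`2n • 1`.
-/

namespace Matrix

variable {ι : Type*}

theorem IsSymm.conjTranspose_mul_self {R : Type*} [Fintype ι] [CommSemiring R] [StarRing R]
    {A : Matrix ι ι R} (hA : A.IsSymm) : Aᴴ * A = (A * Aᴴ)ᵀ := by
  rw [transpose_mul, hA.conjTranspose.eq, hA.eq]

theorem norm_fromBlocks_apply_eq_one {m E : Type*} [Norm E] {A B C D : Matrix m m E}
    (hA : ∀ i j, ‖A i j‖ = 1) (hB : ∀ i j, ‖B i j‖ = 1) (hC : ∀ i j, ‖C i j‖ = 1)
    (hD : ∀ i j, ‖D i j‖ = 1) : ∀ i j, ‖fromBlocks A B C D i j‖ = 1 := by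
  rintro (i | i) (j | j)
  exacts [hA i j, hB i j, hC i j, hD i j]

section ConferencePattern

variable {𝕜 : Type*} [RCLike 𝕜]

def HasConferencePattern (A : Matrix ι ι 𝕜) : Prop :=
  (∀ i, A i i = 0) ∧ ∀ i j, i ≠ j → ‖A i j‖ = 1

namespace HasConferencePattern

variable {A : Matrix ι ι 𝕜}

theorem conjTranspose (hA : A.HasConferencePattern) : Aᴴ.HasConferencePattern :=
  ⟨fun i => by simp [hA.1 i], fun i j hij => by simp [hA.2 j i hij.symm]⟩

theorem neg (hA : A.HasConferencePattern) : (-A).HasConferencePattern :=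
  ⟨fun i => by simp [hA.1 i], fun i j hij => by simp [hA.2 i j hij]⟩

variable [DecidableEq ι]

theorem norm_add_one_apply (hA : A.HasConferencePattern) (i j : ι) : ‖(A + 1) i j‖ = 1 := by
  obtain rfl | hij := eq_or_ne i j
  · simp [hA.1 i]
  · simp [one_apply_ne hij, hA.2 i j hij]

theorem norm_sub_one_apply (hA : A.HasConferencePattern) (i j : ι) : ‖(A - 1) i j‖ = 1 := by
  obtain rfl | hij := eq_or_ne i j
  · simp [hA.1 i]
  · simp [one_apply_ne hij, hA.2 i j hij]

end HasConferencePattern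

end ConferencePattern

section HadamardDoubling

variable {R : Type*} [DecidableEq ι]

def hadamardDoubling [Ring R] [StarRing R] (A : Matrix ι ι R) : Matrix (ι ⊕ ι) (ι ⊕ ι) R :=
  fromBlocks (A + 1) (Aᴴ - 1) (A - 1) (-Aᴴ - 1)

theorem HasConferencePattern.norm_hadamardDoubling_apply {𝕜 : Type*} [RCLike 𝕜]
    {A : Matrix ι ι 𝕜} (hA : A.HasConferencePattern) :
    ∀ i j, ‖A.hadamardDoubling i j‖ = 1 :=
  norm_fromBlocks_apply_eq_one hA.norm_add_one_apply hA.conjTranspose.norm_sub_one_apply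
    hA.norm_sub_one_apply hA.conjTranspose.neg.norm_sub_one_apply

variable [Fintype ι] [CommRing R] [StarRing R]

theorem hadamardDoubling_mul_conjTranspose (A : Matrix ι ι R) :
    A.hadamardDoubling * A.hadamardDoublingᴴ =
      fromBlocks (A * Aᴴ + Aᴴ * A + 2) (A * Aᴴ - Aᴴ * A)
        (A * Aᴴ - Aᴴ * A) (A * Aᴴ + Aᴴ * A + 2) := by
  simp only [hadamardDoubling, fromBlocks_conjTranspose, fromBlocks_multiply, conjTranspose_add,
    conjTranspose_sub, conjTranspose_neg, conjTranspose_one, conjTranspose_conjTranspose]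
  rw [← one_add_one_eq_two]
  congr 1 <;> noncomm_ring

theorem hadamardDoubling_mul_conjTranspose_of_eq_smul_one {A : Matrix ι ι R} {c : R}
    (h₁ : A * Aᴴ = c • 1) (h₂ : Aᴴ * A = c • 1) :
    A.hadamardDoubling * A.hadamardDoublingᴴ = (2 * (c + 1)) • 1 := by
  rw [hadamardDoubling_mul_conjTranspose, h₁, h₂, sub_self, ← fromBlocks_one, fromBlocks_smul,
    smul_zero]
  congr 1 <;> simp only [mul_add, add_smul, mul_smul, mul_one, one_smul, ← one_add_one_eq_two]

end HadamardDoubling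

end Matrix

/-- If `C` is a symmetric complex conference matrix of order `n`, then the
`2n×2n` block matrix `H = [[C+I, C*-I],[C-I, -C*-I]]` is a complex Hadamard matrix. -/
theorem conference_to_hadamard (n : ℕ) (C : Matrix (Fin n) (Fin n) ℂ)
    (hdiag : ∀ i, C i i = 0)
    (hoff : ∀ i j, i ≠ j → ‖C i j‖ = 1)
    (hsymm : C.IsSymm)
    (hconf : C * Cᴴ = ((n : ℂ) - 1) • 1)
    (H : Matrix (Fin n ⊕ Fin n) (Fin n ⊕ Fin n) ℂ)
    (hH : H = Matrix.fromBlocks (C + 1) (Cᴴ - 1) (C - 1) (-Cᴴ - 1)) :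
    (∀ i j, ‖H i j‖ = 1) ∧ H * Hᴴ = (2 * (n : ℂ)) • 1 := by
  change H = C.hadamardDoubling at hH
  subst hH
  have hconf' : Cᴴ * C = ((n : ℂ) - 1) • 1 := by
    rw [hsymm.conjTranspose_mul_self, hconf, transpose_smul, transpose_one]
  refine ⟨HasConferencePattern.norm_hadamardDoubling_apply ⟨hdiag, hoff⟩, ?_⟩
  rw [hadamardDoubling_mul_conjTranspose_of_eq_smul_one hconf hconf', sub_add_cancel]
end

section
/- Let q = 2k-1 = p^α, p odd prime, q ≡ 1 (mod 4), k ≥ 3, and θ ∈ ℝ with cos(2θ) = (2-k)/(k-1). Define the symmetric 2q×2q block matrix S with 2×2 blocks: S_{aa} = 0 and S_{ab} = s_{θ·χ(a-b)} = [[cos(θχ(a-b)), sin(θχ(a-b))],[sin(θχ(a-b)), -cos(θχ(a-b))]] for a ≠ b in GF(q). Then S² = (2k-2)·I_{2q}. -/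
open Matrix

/-- The 2×2 reflection matrix associated to angle `α`. -/
noncomputable def reflMat (α : ℝ) : Matrix (Fin 2) (Fin 2) ℝ :=
  !![Real.cos α, Real.sin α; Real.sin α, -Real.cos α]

lemma reflMat_symm (α : ℝ) (i j : Fin 2) : reflMat α i j = reflMat α j i := by
  fin_cases i <;> fin_cases j <;> simp [reflMat]

/-- product of two reflections is a rotation -/
lemma refl_mul_refl (α β : ℝ) (i j : Fin 2) :
    ∑ m : Fin 2, reflMat α i m * reflMat β m j =
      !![Real.cos (α - β), -Real.sin (α - β); Real.sin (α - β), Real.cos (α - β)] i j := by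
  fin_cases i <;> fin_cases j <;>
    simp [reflMat, Fin.sum_univ_two, Real.cos_sub, Real.sin_sub] <;> ring

lemma cos_theta_diff (θ : ℝ) {u v : ℤ} (hu : u = 1 ∨ u = -1) (hv : v = 1 ∨ v = -1) :
    Real.cos (θ * ((u : ℝ) - (v : ℝ))) =
      (1 + (u : ℝ) * v) / 2 + (1 - (u : ℝ) * v) / 2 * Real.cos (2 * θ) := by
  rcases hu with h | h <;> rcases hv with h' | h' <;> subst h h' <;> push_cast <;>
      norm_num [Real.cos_zero] <;>
    first
      | rw [show θ * (2:ℝ) = 2 * θ by ring]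
      | rw [show θ * (-2:ℝ) = -(2 * θ) by ring, Real.cos_neg]

/-- the key character sum -/
lemma charSum (F : Type*) [Field F] [Fintype F] [DecidableEq F]
    (h2 : ringChar F ≠ 2) (hneg : quadraticChar F (-1) = 1) {a b : F} (hab : a ≠ b) :
    ∑ c : F, (quadraticChar F (a - c)) * (quadraticChar F (c - b)) = -1 := by
  have hd : a - b ≠ 0 := sub_ne_zero.mpr hab
  let e : F ≃ F := (Equiv.mulLeft₀ (a - b) hd).trans (Equiv.addLeft b)
  have he : ∀ x : F, e x = b + (a - b) * x := fun x => rfl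
  rw [← Equiv.sum_comp e (fun c => (quadraticChar F (a - c)) * (quadraticChar F (c - b)))]
  have key : ∀ x : F, (quadraticChar F (a - e x)) * (quadraticChar F (e x - b)) =
      quadraticChar F x * quadraticChar F (1 - x) := by
    intro x
    rw [he]
    have h1 : a - (b + (a - b) * x) = (a - b) * (1 - x) := by ring
    have h2' : b + (a - b) * x - b = (a - b) * x := by ring
    rw [h1, h2', _root_.map_mul, _root_.map_mul]
    ring_nf
    rw [quadraticChar_sq_one hd, one_mul]
  rw [Finset.sum_congr rfl fun x _ => key x]
  have : ∑ x : F, quadraticChar F x * quadraticChar F (1 - x) =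
      jacobiSum (quadraticChar F) (quadraticChar F) := rfl
  rw [this]
  nth_rewrite 2 [← (quadraticChar_isQuadratic F).inv]
  rw [jacobiSum_nontrivial_inv (quadraticChar_ne_one h2), hneg]

/-- For `q = 2k-1 ≡ 1 (mod 4)` an odd prime power, `k ≥ 3`, and `θ` with
`cos 2θ = (2-k)/(k-1)`, the `2q × 2q` block matrix `S` with zero diagonal blocks and
blocks `s_{θ·χ(a-b)}` off the diagonal satisfies `S² = (2k-2)·I`. -/
theorem seidel_square (F : Type*) [Field F] [Fintype F] [DecidableEq F]
    (p : ℕ) (α : ℕ) (hp : p.Prime) (hodd : p ≠ 2)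
    (hcard : Fintype.card F = p ^ α) (hmod : Fintype.card F % 4 = 1)
    (k : ℕ) (hk : Fintype.card F = 2 * k - 1) (hk3 : 3 ≤ k)
    (θ : ℝ) (hθ : Real.cos (2 * θ) = (2 - (k : ℝ)) / ((k : ℝ) - 1))
    (S : Matrix (F × Fin 2) (F × Fin 2) ℝ)
    (hS : S = Matrix.of fun x y : F × Fin 2 =>
      if x.1 = y.1 then 0
      else reflMat (θ * ((quadraticChar F (x.1 - y.1) : ℤ) : ℝ)) x.2 y.2) :
    S.IsSymm ∧ S * S = (2 * (k : ℝ) - 2) • 1 := by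
  have h2 : ringChar F ≠ 2 := by
    intro h
    have := FiniteField.even_card_of_char_two h
    omega
  have hneg1 : quadraticChar F (-1) = 1 := by
    rw [quadraticChar_neg_one h2]
    exact ZMod.χ₄_nat_one_mod_four hmod
  have hχneg : ∀ x : F, quadraticChar F (-x) = quadraticChar F x := by
    intro x
    rw [show -x = -1 * x by ring, _root_.map_mul, hneg1, one_mul]
  have hq5 : 5 ≤ Fintype.card F := by
    have := Fintype.one_lt_card (α := F)
    omega
  have hkR : ((Fintype.card F : ℝ)) = 2 * (k : ℝ) - 1 := by
    rw [hk]
    push_cast [Nat.cast_sub (by omega : 1 ≤ 2 * k)]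
    ring
  have hk1 : ((k : ℝ) - 1) ≠ 0 := by
    have : (3 : ℝ) ≤ (k : ℝ) := by exact_mod_cast hk3
    linarith
  constructor
  · -- symmetry
    subst hS
    rw [Matrix.IsSymm]
    ext ⟨a, i⟩ ⟨b, j⟩
    simp only [Matrix.transpose_apply, Matrix.of_apply]
    by_cases hab : a = b
    · simp [hab]
    · rw [if_neg (Ne.symm hab), if_neg hab]
      rw [show b - a = -(a - b) by ring, hχneg, reflMat_symm]
  · -- the square
    subst hS
    ext ⟨a, i⟩ ⟨b, j⟩
    rw [Matrix.mul_apply]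
    rw [Fintype.sum_prod_type]
    simp only [Matrix.of_apply]
    have hterm : ∀ c : F,
        (∑ m : Fin 2,
          (if a = c then (0:ℝ) else reflMat (θ * ((quadraticChar F (a - c) : ℤ) : ℝ)) i m) *
          (if c = b then (0:ℝ) else reflMat (θ * ((quadraticChar F (c - b) : ℤ) : ℝ)) m j)) =
        if a = c ∨ c = b then 0 else
          !![Real.cos (θ * (((quadraticChar F (a - c) : ℤ) : ℝ) - ((quadraticChar F (c - b) : ℤ) : ℝ))),
             -Real.sin (θ * (((quadraticChar F (a - c) : ℤ) : ℝ) - ((quadraticChar F (c - b) : ℤ) : ℝ)));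
             Real.sin (θ * (((quadraticChar F (a - c) : ℤ) : ℝ) - ((quadraticChar F (c - b) : ℤ) : ℝ))),
             Real.cos (θ * (((quadraticChar F (a - c) : ℤ) : ℝ) - ((quadraticChar F (c - b) : ℤ) : ℝ)))] i j := by
      intro c
      by_cases h1 : a = c
      · simp [h1]
      · by_cases h2' : c = b
        · simp [h2']
        · rw [if_neg (by tauto)]
          simp only [if_neg h1, if_neg h2']
          rw [refl_mul_refl]
          congr 2 <;> ring
    rw [Finset.sum_congr rfl fun c _ => hterm c]
    by_cases hab : a = b
    · -- diagonal block
      subst hab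
      have hdiag : ∀ c : F, (if a = c ∨ c = a then (0:ℝ) else
          !![Real.cos (θ * (((quadraticChar F (a - c) : ℤ) : ℝ) - ((quadraticChar F (c - a) : ℤ) : ℝ))),
             -Real.sin (θ * (((quadraticChar F (a - c) : ℤ) : ℝ) - ((quadraticChar F (c - a) : ℤ) : ℝ)));
             Real.sin (θ * (((quadraticChar F (a - c) : ℤ) : ℝ) - ((quadraticChar F (c - a) : ℤ) : ℝ))),
             Real.cos (θ * (((quadraticChar F (a - c) : ℤ) : ℝ) - ((quadraticChar F (c - a) : ℤ) : ℝ)))] i j)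
          = (1 : Matrix (Fin 2) (Fin 2) ℝ) i j - (if a = c then (1 : Matrix (Fin 2) (Fin 2) ℝ) i j else 0) := by
        intro c
        by_cases h : a = c
        · simp [h]
        · rw [if_neg (by tauto), if_neg h]
          rw [show c - a = -(a - c) by ring, hχneg, sub_self, mul_zero]
          rw [Real.cos_zero, Real.sin_zero, neg_zero, sub_zero, ← Matrix.one_fin_two]
      rw [Finset.sum_congr rfl fun c _ => hdiag c]
      rw [Finset.sum_sub_distrib, Finset.sum_const, Finset.sum_ite_eq, if_pos (Finset.mem_univ a)]
      rw [Matrix.smul_apply, Matrix.one_apply, Matrix.one_apply]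
      by_cases hij : (i : Fin 2) = j
      · rw [if_pos hij, if_pos (by rw [hij]), smul_eq_mul, mul_one, nsmul_eq_mul, mul_one,
          Finset.card_univ, hk]
        push_cast [Nat.cast_sub (by omega : 1 ≤ 2 * k)]
        ring
      · rw [if_neg hij, if_neg (by simp [Prod.ext_iff, hij]), smul_eq_mul, mul_zero, smul_zero,
          sub_zero]
    · -- off-diagonal block
      have hRHS : ((2 * (k : ℝ) - 2) • (1 : Matrix (F × Fin 2) (F × Fin 2) ℝ)) (a, i) (b, j) = 0 := by
        rw [Matrix.smul_apply, Matrix.one_apply, if_neg (by simp [Prod.ext_iff, hab]), smul_zero]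
      rw [hRHS]
      have hPab : ({a, b} : Finset F).card = 2 := Finset.card_pair hab
      have hQ : ∀ c : F, (a = c ∨ c = b) ↔ c ∈ ({a, b} : Finset F) := by
        intro c; simp [eq_comm, or_comm]
      -- abbreviations
      set C : ℝ := Real.cos (2 * θ) with hC
      have hsum_w : ∑ c : F, (((quadraticChar F (a - c) : ℤ) : ℝ) * ((quadraticChar F (c - b) : ℤ) : ℝ)) = -1 := by
        have h := charSum F h2 hneg1 hab
        exact_mod_cast congrArg (fun z : ℤ => (z : ℝ)) h
      have hcos : ∑ c : F, (if a = c ∨ c = b then (0:ℝ) else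
          Real.cos (θ * (((quadraticChar F (a - c) : ℤ) : ℝ) - ((quadraticChar F (c - b) : ℤ) : ℝ)))) = 0 := by
        have hpt : ∀ c : F, (if a = c ∨ c = b then (0:ℝ) else
            Real.cos (θ * (((quadraticChar F (a - c) : ℤ) : ℝ) - ((quadraticChar F (c - b) : ℤ) : ℝ))))
            = (if c ∈ ({a, b} : Finset F) then 0 else (1 + C)/2)
              + (((quadraticChar F (a - c) : ℤ) : ℝ) * ((quadraticChar F (c - b) : ℤ) : ℝ)) * ((1 - C)/2) := by
          intro c
          by_cases h : a = c ∨ c = b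
          · rw [if_pos h, if_pos ((hQ c).mp h)]
            rcases h with h | h
            · rw [← h, sub_self]
              simp
            · rw [h, sub_self]
              simp
          · rw [if_neg h, if_neg (fun hm => h ((hQ c).mpr hm))]
            rw [cos_theta_diff θ
              (quadraticChar_dichotomy (a := a - c) (sub_ne_zero.mpr (fun hh => h (Or.inl hh))))
              (quadraticChar_dichotomy (a := c - b) (sub_ne_zero.mpr (fun hh => h (Or.inr hh)))),
              ← hC]
            ring
        rw [Finset.sum_congr rfl fun c _ => hpt c]
        rw [Finset.sum_add_distrib, ← Finset.sum_mul, hsum_w]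
        have h1 : ∑ c : F, (if c ∈ ({a, b} : Finset F) then (0:ℝ) else (1 + C)/2)
            = (Fintype.card F : ℝ) * ((1 + C)/2) - 2 * ((1 + C)/2) := by
          have hpt2 : ∀ c : F, (if c ∈ ({a, b} : Finset F) then (0:ℝ) else (1 + C)/2)
              = (1 + C)/2 - (if c ∈ ({a, b} : Finset F) then (1 + C)/2 else 0) := by
            intro c; by_cases h : c ∈ ({a, b} : Finset F) <;> simp [h]
          rw [Finset.sum_congr rfl fun c _ => hpt2 c, Finset.sum_sub_distrib,
            Finset.sum_const, Finset.sum_ite_mem, Finset.univ_inter, Finset.sum_const, hPab,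
            Finset.card_univ]
          simp [nsmul_eq_mul]
        rw [h1, hkR, hθ]
        field_simp
        ring
      have hsin : ∑ c : F, (if a = c ∨ c = b then (0:ℝ) else
          Real.sin (θ * (((quadraticChar F (a - c) : ℤ) : ℝ) - ((quadraticChar F (c - b) : ℤ) : ℝ)))) = 0 := by
        apply Finset.sum_ninvolution (fun c => a + b - c)
        · intro c
          by_cases h1 : a = c
          · rw [if_pos (Or.inl h1), if_pos (Or.inr (by rw [← h1]; ring))]
            norm_num
          · by_cases h2' : c = b
            · rw [if_pos (Or.inr h2'), if_pos (Or.inl (by rw [h2']; ring))]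
              norm_num
            · have hg : ¬(a = a + b - c ∨ a + b - c = b) := by
                push_neg
                exact ⟨fun h => h2' (by linear_combination h),
                       fun h => h1 (by linear_combination h)⟩
              rw [if_neg (fun h => h.elim h1 h2'), if_neg hg]
              rw [show a - (a + b - c) = c - b by ring, show a + b - c - b = a - c by ring]
              rw [show θ * (((quadraticChar F (c - b) : ℤ) : ℝ) - ((quadraticChar F (a - c) : ℤ) : ℝ))
                  = -(θ * (((quadraticChar F (a - c) : ℤ) : ℝ) - ((quadraticChar F (c - b) : ℤ) : ℝ))) by ring,
                Real.sin_neg]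
              ring
        · intro c hne heq
          apply hne
          have hac : a - c = c - b := by linear_combination heq
          by_cases h : a = c ∨ c = b
          · rw [if_pos h]
          · rw [if_neg h, hac, sub_self, mul_zero, Real.sin_zero]
        · intro c; exact Finset.mem_univ _
        · intro c; ring
      have hsin' : ∑ c : F, (if a = c ∨ c = b then (0:ℝ) else
          -Real.sin (θ * (((quadraticChar F (a - c) : ℤ) : ℝ) - ((quadraticChar F (c - b) : ℤ) : ℝ)))) = 0 := by
        have hpt : ∀ c : F, (if a = c ∨ c = b then (0:ℝ) else
            -Real.sin (θ * (((quadraticChar F (a - c) : ℤ) : ℝ) - ((quadraticChar F (c - b) : ℤ) : ℝ))))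
            = -(if a = c ∨ c = b then (0:ℝ) else Real.sin (θ * (((quadraticChar F (a - c) : ℤ) : ℝ) - ((quadraticChar F (c - b) : ℤ) : ℝ)))) := by
          intro c; by_cases h : a = c ∨ c = b <;> simp [h]
        rw [Finset.sum_congr rfl fun c _ => hpt c, Finset.sum_neg_distrib, hsin, neg_zero]
      fin_cases i <;> fin_cases j <;>
        simp only [Matrix.cons_val', Matrix.cons_val_zero, Matrix.cons_val_one,
          Matrix.head_cons, Matrix.head_fin_const, Matrix.empty_val',
          Matrix.cons_val_fin_one] <;>
        first
          | exact hcos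
          | exact hsin
          | exact hsin'
end
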